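/- Let N be a BNN given by the Boolean functions f_0, …, f_{n−1} and let γ = (t₁ ∼ t₂) be an atomic constraint whose terms t₁ and t₂ are compatible w.r.t. collapsion. Then for each position i ≥ n: N, i ⊨ γ if and only if N, i ⊨ γ↓. -/
import Mathlib


/-- A Boolean function with declared input and output widths
(a mapping from 0-1 vectors of width `inW` to 0-1 vectors of width `outW`). -/
structure BFunc where
  inW : ℕ
  outW : ℕ
  fn : List Bool → List Bool

/-- A binarized neural network: a finite sequence of Boolean functions (blocks). -/
abbrev BNN := List BFunc

/-- The `i`-th block of the BNN `N`; the identity function for `i ≥ n`. -/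
def blk (N : BNN) (i : ℕ) : List Bool → List Bool :=
  if h : i < N.length then (N.get ⟨i, h⟩).fn else id

/-- BLTL terms: `t ::= b | f(t) | ⊳^k t`. -/
inductive Term where
  | const : List Bool → Term
  | app   : BFunc → Term → Term
  | ph    : ℕ → Term → Term

/-- `slen`: `slen(b) = 0`, `slen(f(t)) = slen(t) + 1`, `slen(⊳^k t) = slen(t) + k`. -/
def slen : Term → ℕ
  | .const _ => 0
  | .app _ t => slen t + 1
  | .ph k t  => slen t + k

/-- `applyRange N s k v = (f_{s+k-1} ∘ ⋯ ∘ f_s) v` (and `v` itself when `k = 0`). -/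
def applyRange (N : BNN) (s : ℕ) : ℕ → List Bool → List Bool
  | 0, v => v
  | k + 1, v => blk N (s + k) (applyRange N s k v)

/-- Term semantics `⟦t⟧_{N,i}`. -/
def evalT (N : BNN) (i : ℕ) : Term → List Bool
  | .const b => b
  | .app f t => f.fn (evalT N i t)
  | .ph k t  => applyRange N (i + slen t) k (evalT N i t)

/-- The five comparison relations `≤, ≥, <, >, =`. -/
inductive Cmp | le | ge | lt | gt | eq

def cmpB : Cmp → Bool → Bool → Prop
  | .le, x, y => x ≤ y
  | .ge, x, y => y ≤ x
  | .lt, x, y => x < y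
  | .gt, x, y => y < x
  | .eq, x, y => x = y

/-- Componentwise comparison of equal-width 0-1 vectors. -/
def vecCmp (c : Cmp) (a b : List Bool) : Prop :=
  List.Forall₂ (cmpB c) a b

/-- BLTL formulas: `ψ ::= ⊤ | t₁ ∼ t₂ | ¬ψ | ψ ∨ ψ | Xψ | ψ U ψ`. -/
inductive Formula where
  | tt   : Formula
  | atom : Cmp → Term → Term → Formula
  | neg  : Formula → Formula
  | disj : Formula → Formula → Formula
  | next : Formula → Formula
  | untl : Formula → Formula → Formula

/-- Satisfaction `N, i ⊨ ψ`. -/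
def Sat (N : BNN) : ℕ → Formula → Prop
  | _, .tt => True
  | i, .atom c t₁ t₂ => vecCmp c (evalT N i t₁) (evalT N i t₂)
  | i, .neg ψ => ¬ Sat N i ψ
  | i, .disj ψ₁ ψ₂ => Sat N i ψ₁ ∨ Sat N i ψ₂
  | i, .next ψ => i < N.length - 1 ∧ Sat N (i + 1) ψ
  | i, .untl ψ₁ ψ₂ =>
      ∃ j, i ≤ j ∧ j < N.length ∧ Sat N j ψ₂ ∧ ∀ k, i ≤ k → k < j → Sat N k ψ₁

/-- `⊥ := ¬⊤`. -/
def Formula.ff : Formula := .neg .tt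
/-- `ψ₁ ∧ ψ₂ := ¬(¬ψ₁ ∨ ¬ψ₂)`. -/
def Formula.conj (ψ₁ ψ₂ : Formula) : Formula := .neg (.disj (.neg ψ₁) (.neg ψ₂))
/-- `Fψ := ⊤ U ψ`. -/
def Formula.ev (ψ : Formula) : Formula := .untl .tt ψ
/-- `Gψ := ¬F¬ψ`. -/
def Formula.glob (ψ : Formula) : Formula := .neg (.ev (.neg ψ))
/-- `X̃ψ := ¬X¬ψ`. -/
def Formula.wnext (ψ : Formula) : Formula := .neg (.next (.neg ψ))
/-- `ψ₁ R ψ₂ := ¬(¬ψ₁ U ¬ψ₂)`. -/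
def Formula.rel (ψ₁ ψ₂ : Formula) : Formula := .neg (.untl (.neg ψ₁) (.neg ψ₂))

/-- `len(t)`: the total number of placeholders `⊳` in `t`
(`ℓ_0 + ⋯ + ℓ_k` for the canonical form). -/
def lenT : Term → ℕ
  | .const _ => 0
  | .app _ t => lenT t
  | .ph k t  => lenT t + k

/-- Evaluation of a `⊳`-free term (placeholders, if any, are ignored). -/
def evalFree : Term → List Bool
  | .const b => b
  | .app f t => f.fn (evalFree t)
  | .ph _ t  => evalFree t

/-- The application `t[f]`: instantiate the innermost placeholder of `t` by `f`
(`t[f] = t` when `len(t) = 0`). -/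
def applyF (f : BFunc) : Term → Term
  | .const b => .const b
  | .app g t => .app g (applyF f t)
  | .ph k t  =>
      if 0 < lenT t then .ph k (applyF f t)
      else
        match k with
        | 0 => .ph 0 t
        | k + 1 => .ph k (.const (f.fn (evalFree t)))

/-- Whether a term contains some function symbol. -/
def hasApp : Term → Bool
  | .const _ => false
  | .app _ _ => true
  | .ph _ t  => hasApp t

/-- `ℓ_0` of the canonical form of `t`: the number of placeholders below the
innermost function symbol (all placeholders if there is no function symbol). -/
def ell0 : Term → ℕ
  | .const _ => 0
  | .app _ t => ell0 t
  | .ph k t  => if hasApp t then ell0 t else lenT t + k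

/-- The innermost function symbol `g_0` of the canonical form of `t` (if any). -/
def g0? : Term → Option BFunc
  | .const _ => none
  | .app g t => some ((g0? t).getD g)
  | .ph _ t  => g0? t

/-- The vector constant `b` at the bottom of the term. -/
def baseConst : Term → List Bool
  | .const b => b
  | .app _ t => baseConst t
  | .ph _ t  => baseConst t

/-- `f` is applicable w.r.t. `t`: `b ∈ dom(f)` and, when `ℓ_0 = 1`, `ran(f) = dom(g_0)`. -/
def Applicable (f : BFunc) (t : Term) : Prop :=
  (baseConst t).length = f.inW ∧
  (ell0 t = 1 → ∀ g, g0? t = some g → f.outW = g.inW)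

/-- The collapsion `t↓`: all placeholders are replaced by identity functions. -/
def collapse : Term → Term
  | .const b => .const b
  | .app g t => .app g (collapse t)
  | .ph _ t  => collapse t

/-- `t₁` and `t₂` are compatible w.r.t. collapsion: `t₁↓` and `t₂↓` have the same width. -/
def Compatible (t₁ t₂ : Term) : Prop :=
  (evalFree (collapse t₁)).length = (evalFree (collapse t₂)).length

lemma blk_id (N : BNN) {j : ℕ} (h : N.length ≤ j) : blk N j = id := by
  simp [blk, Nat.not_lt.2 h]

lemma applyRange_id (N : BNN) {s : ℕ} (h : N.length ≤ s) (k : ℕ) (v : List Bool) :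
    applyRange N s k v = v := by
  induction k with
  | zero => rfl
  | succ k ih => simp [applyRange, blk_id N (le_trans h (Nat.le_add_right s k)), ih]

lemma evalT_eq_evalFree (N : BNN) {i : ℕ} (h : N.length ≤ i) (t : Term) :
    evalT N i t = evalFree t := by
  induction t with
  | const b => rfl
  | app f t ih => simp [evalT, evalFree, ih]
  | ph k t ih =>
      simp [evalT, evalFree, ih,
        applyRange_id N (le_trans h (Nat.le_add_right i (slen t)))]

lemma evalFree_collapse (t : Term) : evalFree (collapse t) = evalFree t := by
  induction t with
  | const b => rfl
  | app f t ih => simp [collapse, evalFree, ih]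
  | ph k t ih => simpa [collapse, evalFree] using ih

/-- Let `N` be a BNN given by `f_0, …, f_{n−1}` and `γ = (t₁ ∼ t₂)`
an atomic constraint whose terms are compatible w.r.t. collapsion.
Then for each position `i ≥ n`: `N, i ⊨ γ` iff `N, i ⊨ γ↓`. -/
theorem sat_atom_iff_sat_collapse (N : BNN) (c : Cmp) (t₁ t₂ : Term) (i : ℕ)
    (hc : Compatible t₁ t₂) (hi : N.length ≤ i) :
    Sat N i (.atom c t₁ t₂) ↔ Sat N i (.atom c (collapse t₁) (collapse t₂)) := by
  simp only [Sat, evalT_eq_evalFree N hi, evalFree_collapse]
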